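/- Let {q_k}_{k≥0} be a sequence of nonnegative reals with q_0 > 0. Let n ≥ 1 have binary decomposition n = 2^{n_1} + 2^{n_2} + ⋯ + 2^{n_r} with n_1 > n_2 > ⋯ > n_r ≥ 0, and set n^{(0)} := n, n^{(j)} := n^{(j−1)} − 2^{n_j} for 1 ≤ j ≤ r. Then the Walsh–Nörlund kernel satisfies the pointwise identity on [0,1): F_n = (w_n/Q_n) Σ_{j=1}^{r} Q_{n^{(j−1)}} w_{2^{n_j}} D_{2^{n_j}} − (w_n/Q_n) Σ_{j=1}^{r} w_{n^{(j−1)}} w_{2^{n_j}−1} Σ_{k=1}^{2^{n_j}−1} q_{k+n^{(j)}} D_k. -/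

import Mathlib

open MeasureTheory Filter
open scoped ENNReal NNReal

noncomputable section

namespace Walsh

/-- Lebesgue measure restricted to `[0,1)`. -/
def μI : Measure ℝ := volume.restrict (Set.Ico (0:ℝ) 1)

/-- The `k`-th binary digit `x_k` of `x ∈ [0,1)`, using the expansion terminating
in `0`'s for dyadic rationals. -/
def digit (k : ℕ) (x : ℝ) : ℕ := (⌊x * 2 ^ (k + 1)⌋).toNat % 2

/-- `ε_k(n)`, the `k`-th binary coefficient of `n`. -/
def eps (k n : ℕ) : ℕ := if n.testBit k then 1 else 0

/-- Walsh–Paley function `w_n(x) = (-1)^{Σ_k ε_k(n) x_k}`. -/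
def walsh (n : ℕ) (x : ℝ) : ℝ :=
  (-1 : ℝ) ^ (∑ k ∈ Finset.range (n + 1), eps k n * digit k x)

/-- Walsh–Dirichlet kernel `D_n = Σ_{k=0}^{n-1} w_k`. -/
def D (n : ℕ) (x : ℝ) : ℝ := ∑ k ∈ Finset.range n, walsh k x

/-- Walsh–Fejér kernel `K_n = (1/n) Σ_{k=1}^{n} D_k`. -/
def K (n : ℕ) (x : ℝ) : ℝ := (1 / (n : ℝ)) * ∑ k ∈ Finset.Icc 1 n, D k x

/-- Partial sums `S_M(f) = Σ_{i=0}^{M-1} f̂(i) w_i` of the Walsh–Fourier series. -/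
def S (f : ℝ → ℝ) (M : ℕ) (x : ℝ) : ℝ :=
  ∑ i ∈ Finset.range M, (∫ t in Set.Ico (0:ℝ) 1, f t * walsh i t) * walsh i x

/-- `Q_n = q_0 + ⋯ + q_{n-1}`. -/
def Q (q : ℕ → ℝ) (n : ℕ) : ℝ := ∑ k ∈ Finset.range n, q k

/-- Walsh–Nörlund mean `t_n(f) = (1/Q_n) Σ_{k=1}^n q_{n-k} S_k(f)`. -/
def t (q : ℕ → ℝ) (n : ℕ) (f : ℝ → ℝ) (x : ℝ) : ℝ :=
  (1 / Q q n) * ∑ k ∈ Finset.Icc 1 n, q (n - k) * S f k x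

/-- Walsh–Nörlund kernel `F_n = (1/Q_n) Σ_{k=1}^n q_{n-k} D_k`. -/
def F (q : ℕ → ℝ) (n : ℕ) (x : ℝ) : ℝ :=
  (1 / Q q n) * ∑ k ∈ Finset.Icc 1 n, q (n - k) * D k x

/-- Maximal Nörlund operator `t^*(f) = sup_{n ≥ 1} |t_n(f)|`, valued in `ℝ≥0∞`. -/
def tstar (q : ℕ → ℝ) (f : ℝ → ℝ) (x : ℝ) : ℝ≥0∞ :=
  ⨆ n ∈ Set.Ici 1, ENNReal.ofReal |t q n f x|

/-- `L^p[0,1)` quasinorm (`0 < p ≤ 1`) of a real function, valued in `ℝ≥0∞`. -/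
def LpNorm (p : ℝ) (g : ℝ → ℝ) : ℝ≥0∞ :=
  (∫⁻ x in Set.Ico (0:ℝ) 1, ENNReal.ofReal |g x| ^ p) ^ (1 / p)

/-- `L^p[0,1)` quasinorm of an `ℝ≥0∞`-valued function. -/
def LpNormE (p : ℝ) (g : ℝ → ℝ≥0∞) : ℝ≥0∞ :=
  (∫⁻ x in Set.Ico (0:ℝ) 1, g x ^ p) ^ (1 / p)

/-- `L^∞[0,1)` norm. -/
def LinfNorm (g : ℝ → ℝ) : ℝ≥0∞ := essSup (fun x => ENNReal.ofReal |g x|) μI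

/-- Dyadic maximal function `E^*(f) = sup_m |S_{2^m}(f)|`, valued in `ℝ≥0∞`. -/
def maxS (f : ℝ → ℝ) (x : ℝ) : ℝ≥0∞ := ⨆ m : ℕ, ENNReal.ofReal |S f (2 ^ m) x|

/-- Dyadic Hardy space quasinorm `‖f‖_{H_p} = ‖sup_m |S_{2^m} f|‖_{L^p}`. -/
def HpNorm (p : ℝ) (f : ℝ → ℝ) : ℝ≥0∞ :=
  (∫⁻ x in Set.Ico (0:ℝ) 1, maxS f x ^ p) ^ (1 / p)

/-- Dyadic (logical) addition `x ∔ y = Σ_k |x_k - y_k| 2^{-(k+1)}`. -/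
def dadd (x y : ℝ) : ℝ :=
  ∑' k : ℕ, |(digit k x : ℝ) - (digit k y : ℝ)| * (2 : ℝ)⁻¹ ^ (k + 1)

/-- The dyadic interval `I_N = [0, 2^{-N})`. -/
def IN (N : ℕ) : Set ℝ := Set.Ico (0:ℝ) (1 / 2 ^ N)

/-- `F_{n,1} = (w_n/Q_n) Σ_{j=1}^r Q_{n^{(j-1)}} w_{2^{n_j}} D_{2^{n_j}}`,
the first part of the Nörlund kernel decomposition. The sum over the binary
decomposition `n = 2^{n_1} + ⋯ + 2^{n_r}` is re-indexed over the set bit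
positions `i` of `n`; if `i = n_j` then `n^{(j-1)} = n mod 2^{i+1}`. -/
def F1 (q : ℕ → ℝ) (n : ℕ) (x : ℝ) : ℝ :=
  (walsh n x / Q q n) *
    ∑ i ∈ Finset.range (n + 1),
      if n.testBit i then Q q (n % 2 ^ (i + 1)) * walsh (2 ^ i) x * D (2 ^ i) x else 0

end Walsh

/-! Abel summation turns `Q_n F_n` into `∑_{u<n} Q_{n-u} w_u`. The range `[0, n)` splits into
consecutive dyadic blocks of lengths `2^{n_1}, …, 2^{n_r}`; the block of length `2^s` starts at a
multiple of `2^{s+1}`, so `w_{a+v} = w_a w_v` on it. Inside a block, the reflection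
`v ↦ 2^s - 1 - v = (2^s - 1) xor v` gives `w_{2^s-1-v} = w_{2^s-1} w_v`, and a second Abel
summation produces the two terms of the decomposition, using `w_c D_{2^s} = D_{2^s}` for `c < 2^s`
and `w_k² = 1`. -/

open Finset

theorem Finset.sum_range_eq_sum_blocks {M : Type*} [AddCommMonoid M] {n r : ℕ} (a : ℕ → ℕ)
    (hn : n = ∑ j ∈ range r, a j) (g : ℕ → M) :
    ∑ u ∈ range n, g u = ∑ j ∈ range r, ∑ v ∈ range (a j), g (∑ i ∈ range j, a i + v) := by
  subst hn
  induction r with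
  | zero => simp
  | succ r ih => rw [sum_range_succ, sum_range_add, ih, sum_range_succ]

namespace Nat

theorem two_pow_mul_add_eq_xor {i b : ℕ} (a : ℕ) (hb : b < 2 ^ i) :
    2 ^ i * a + b = 2 ^ i * a ^^^ b := by
  refine eq_of_testBit_eq fun j => ?_
  rw [testBit_two_pow_mul_add a hb, testBit_xor, testBit_two_pow_mul]
  split_ifs with hj
  · simp [Nat.not_le.mpr hj]
  · have : b.testBit j = false :=
      testBit_lt_two_pow (hb.trans_le (pow_le_pow_right₀ one_le_two (by omega)))
    simp [Nat.le_of_not_lt hj, this]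

theorem two_pow_sub_one_xor {s v : ℕ} (hv : v < 2 ^ s) : (2 ^ s - 1) ^^^ v = 2 ^ s - 1 - v := by
  refine eq_of_testBit_eq fun i => ?_
  rw [show 2 ^ s - 1 - v = 2 ^ s - (v + 1) by omega, testBit_two_pow_sub_succ hv, testBit_xor,
    testBit_two_pow_sub_one]
  by_cases hi : i < s
  · simp [hi]
  · have : v.testBit i = false :=
      testBit_lt_two_pow (hv.trans_le (pow_le_pow_right₀ one_le_two (by omega)))
    simp [hi, this]

end Nat

namespace Walsh

theorem sum_range_eps_mul_eq_of_le {n N M : ℕ} (hn : n < 2 ^ N) (hNM : N ≤ M) (d : ℕ → ℕ) :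
    ∑ k ∈ range N, eps k n * d k = ∑ k ∈ range M, eps k n * d k := by
  refine sum_subset (range_subset_range.2 hNM) fun k _ hk => ?_
  have : n < 2 ^ k := hn.trans_le (Nat.pow_le_pow_right two_pos (by simpa using hk))
  simp [eps, Nat.testBit_lt_two_pow this]

theorem walsh_eq_of_lt_two_pow {n N : ℕ} (hn : n < 2 ^ N) (x : ℝ) :
    walsh n x = (-1) ^ ∑ k ∈ range N, eps k n * digit k x := by
  have hn' : n < 2 ^ (n + 1) := Nat.lt_two_pow_self.trans (Nat.pow_lt_pow_succ one_lt_two)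
  rw [walsh, sum_range_eps_mul_eq_of_le hn' (Nat.le_add_left _ N),
    sum_range_eps_mul_eq_of_le hn (Nat.le_add_right N (n + 1))]

theorem walsh_mul (a b : ℕ) (x : ℝ) : walsh a x * walsh b x = walsh (a ^^^ b) x := by
  have ha : a < 2 ^ (a + b) :=
    Nat.lt_two_pow_self.trans_le (Nat.pow_le_pow_right two_pos (by omega))
  have hb : b < 2 ^ (a + b) :=
    Nat.lt_two_pow_self.trans_le (Nat.pow_le_pow_right two_pos (by omega))
  simp only [walsh_eq_of_lt_two_pow ha, walsh_eq_of_lt_two_pow hb,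
    walsh_eq_of_lt_two_pow (Nat.xor_lt_two_pow ha hb), ← prod_pow_eq_pow_sum, ← prod_mul_distrib]
  refine prod_congr rfl fun k _ => ?_
  cases hak : a.testBit k <;> cases hbk : b.testBit k <;> simp [eps, hak, hbk, ← mul_pow]

theorem walsh_zero (x : ℝ) : walsh 0 x = 1 := by
  simp [walsh, eps]

theorem walsh_mul_self (n : ℕ) (x : ℝ) : walsh n x * walsh n x = 1 := by
  rw [walsh_mul, Nat.xor_self, walsh_zero]

theorem walsh_add_of_dvd {i a b : ℕ} (ha : 2 ^ i ∣ a) (hb : b < 2 ^ i) (x : ℝ) :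
    walsh (a + b) x = walsh a x * walsh b x := by
  obtain ⟨c, rfl⟩ := ha
  rw [walsh_mul, Nat.two_pow_mul_add_eq_xor c hb]

theorem walsh_two_pow_sub_one_sub {s v : ℕ} (hv : v < 2 ^ s) (x : ℝ) :
    walsh (2 ^ s - 1 - v) x = walsh (2 ^ s - 1) x * walsh v x := by
  rw [walsh_mul, Nat.two_pow_sub_one_xor hv]

theorem walsh_mul_D_two_pow {s c : ℕ} (hc : c < 2 ^ s) (x : ℝ) :
    walsh c x * D (2 ^ s) x = D (2 ^ s) x := by
  rw [D, mul_sum]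
  refine sum_nbij' (c ^^^ ·) (c ^^^ ·) ?_ ?_ ?_ ?_ fun v _ => walsh_mul c v x <;>
    simp +contextual [Nat.xor_lt_two_pow hc]

theorem sum_Icc_mul_D (c : ℕ → ℝ) (N : ℕ) (x : ℝ) :
    ∑ k ∈ Icc 1 N, c k * D k x = ∑ v ∈ range N, (∑ k ∈ Ioc v N, c k) * walsh v x := by
  simp only [D, mul_sum, sum_mul]
  exact sum_comm' fun k v => by simp only [mem_Icc, mem_range, mem_Ioc]; omega

theorem sum_Ioc_sub_eq_Q (q : ℕ → ℝ) {u n : ℕ} :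
    ∑ k ∈ Ioc u n, q (n - k) = Q q (n - u) := by
  rw [← Finset.Ico_add_one_add_one_eq_Ioc, sum_Ico_reflect _ _ le_rfl, Q, range_eq_Ico,
    Nat.sub_self, Nat.add_sub_add_right]

theorem sum_Ioc_add_eq_Q_sub (q : ℕ → ℝ) {v N : ℕ} (m : ℕ) (hv : v ≤ N) :
    ∑ k ∈ Ioc v N, q (k + m) = Q q (N + 1 + m) - Q q (v + 1 + m) := by
  rw [← Finset.Ico_add_one_add_one_eq_Ioc, sum_Ico_add', Q, Q, sum_Ico_eq_sub _ (by omega)]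

theorem sum_mul_D_eq_sum_Q_mul_walsh (q : ℕ → ℝ) (n : ℕ) (x : ℝ) :
    ∑ k ∈ Icc 1 n, q (n - k) * D k x = ∑ u ∈ range n, Q q (n - u) * walsh u x := by
  simp only [sum_Icc_mul_D, sum_Ioc_sub_eq_Q]

theorem sum_Q_mul_walsh_two_pow (q : ℕ → ℝ) {s m : ℕ} (hm : m < 2 ^ s) (x : ℝ) :
    ∑ v ∈ range (2 ^ s), Q q (2 ^ s + m - v) * walsh v x
      = Q q (2 ^ s + m) * (walsh m x * D (2 ^ s) x)
        - walsh (2 ^ s - 1) x * ∑ k ∈ Icc 1 (2 ^ s - 1), q (k + m) * D k x := by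
  obtain ⟨N, hN⟩ : ∃ N, 2 ^ s = N + 1 := ⟨2 ^ s - 1, by have := Nat.one_le_two_pow (n := s); omega⟩
  have reflect : ∑ v ∈ range (2 ^ s), Q q (2 ^ s + m - v) * walsh v x
      = walsh (2 ^ s - 1) x * ∑ v ∈ range (2 ^ s), Q q (v + 1 + m) * walsh v x := by
    rw [← sum_range_reflect, mul_sum]
    refine sum_congr rfl fun v hv => ?_
    rw [mem_range] at hv
    rw [walsh_two_pow_sub_one_sub hv, show 2 ^ s + m - (2 ^ s - 1 - v) = v + 1 + m by omega]
    ring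
  have abel : ∑ k ∈ Icc 1 (2 ^ s - 1), q (k + m) * D k x
      = Q q (2 ^ s + m) * D (2 ^ s) x - ∑ v ∈ range (2 ^ s), Q q (v + 1 + m) * walsh v x := by
    rw [sum_Icc_mul_D, hN, Nat.add_sub_cancel, D, mul_sum, ← sum_sub_distrib, sum_range_succ,
      sub_self, add_zero]
    refine sum_congr rfl fun v hv => ?_
    rw [sum_Ioc_add_eq_Q_sub q m (mem_range.1 hv).le]
    ring
  rw [reflect, abel, walsh_mul_D_two_pow hm, mul_sub, mul_left_comm (walsh (2 ^ s - 1) x),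
    walsh_mul_D_two_pow (by omega)]
  ring

theorem sum_Q_mul_walsh_block (q : ℕ → ℝ) {n a s m : ℕ} (ha : 2 ^ (s + 1) ∣ a) (hm : m < 2 ^ s)
    (hn : n = a + 2 ^ s + m) (x : ℝ) :
    ∑ v ∈ range (2 ^ s), Q q (n - (a + v)) * walsh (a + v) x
      = walsh n x * (Q q (n - a) * (walsh (2 ^ s) x * D (2 ^ s) x)
        - walsh (n - a) x * walsh (2 ^ s - 1) x * ∑ k ∈ Icc 1 (2 ^ s - 1), q (k + m) * D k x) := by
  subst hn
  have ha' : 2 ^ s ∣ a := (pow_dvd_pow 2 s.le_succ).trans ha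
  have hsm : 2 ^ s + m < 2 ^ (s + 1) := by rw [pow_succ]; omega
  rw [show a + 2 ^ s + m - a = 2 ^ s + m by omega, add_assoc a, walsh_add_of_dvd ha hsm,
    walsh_add_of_dvd (dvd_refl _) hm]
  calc ∑ v ∈ range (2 ^ s), Q q (a + (2 ^ s + m) - (a + v)) * walsh (a + v) x
      = walsh a x * ∑ v ∈ range (2 ^ s), Q q (2 ^ s + m - v) * walsh v x := by
        rw [mul_sum]
        refine sum_congr rfl fun v hv => ?_
        rw [walsh_add_of_dvd ha' (mem_range.1 hv), Nat.add_sub_add_left]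
        ring
    _ = _ := by
        rw [sum_Q_mul_walsh_two_pow q hm]
        linear_combination (walsh a x * walsh (2 ^ s - 1) x * walsh m x * walsh m x
            * ∑ k ∈ Icc 1 (2 ^ s - 1), q (k + m) * D k x
          - walsh a x * Q q (2 ^ s + m) * walsh m x * D (2 ^ s) x) * walsh_mul_self (2 ^ s) x
          + walsh a x * walsh (2 ^ s - 1) x * (∑ k ∈ Icc 1 (2 ^ s - 1), q (k + m) * D k x)
            * walsh_mul_self m x

theorem two_pow_succ_dvd_sum_range {ns : ℕ → ℕ} {r j : ℕ}
    (hdec : ∀ i j, i < j → j < r → ns j < ns i) (hj : j < r) :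
    2 ^ (ns j + 1) ∣ ∑ i ∈ range j, 2 ^ ns i :=
  dvd_sum fun i hi => pow_dvd_pow 2 (hdec i j (mem_range.1 hi) hj)

theorem sum_Ico_two_pow_lt {ns : ℕ → ℕ} {r : ℕ} (hdec : ∀ i j, i < j → j < r → ns j < ns i)
    (j : ℕ) : ∑ i ∈ Ico (j + 1) r, 2 ^ ns i < 2 ^ ns j := by
  have hinj : Set.InjOn ns (Ico (j + 1) r) := by
    intro a ha b hb hab
    simp only [coe_Ico, Set.mem_Ico] at ha hb
    rcases lt_trichotomy a b with h | h | h
    · exact absurd hab (hdec a b h hb.2).ne'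
    · exact h
    · exact absurd hab (hdec b a h ha.2).ne
  rw [← sum_image hinj]
  refine Nat.geomSum_lt le_rfl fun t ht => ?_
  obtain ⟨i, hi, rfl⟩ := mem_image.1 ht
  exact hdec j i (mem_Ico.1 hi).1 (mem_Ico.1 hi).2

end Walsh

theorem norlund_kernel_decomposition_general
    (q : ℕ → ℝ)
    (n r : ℕ) (ns : ℕ → ℕ)
    (hdec : ∀ i j, i < j → j < r → ns j < ns i)
    (hrep : n = ∑ j ∈ Finset.range r, 2 ^ ns j)
    (x : ℝ) :
    Walsh.F q n x
      = (Walsh.walsh n x / Walsh.Q q n) *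
          (∑ j ∈ Finset.range r,
            Walsh.Q q (n - ∑ i ∈ Finset.range j, 2 ^ ns i) *
              (Walsh.walsh (2 ^ ns j) x * Walsh.D (2 ^ ns j) x))
        - (Walsh.walsh n x / Walsh.Q q n) *
          (∑ j ∈ Finset.range r,
            Walsh.walsh (n - ∑ i ∈ Finset.range j, 2 ^ ns i) x *
              Walsh.walsh (2 ^ ns j - 1) x *
              ∑ k ∈ Finset.Icc 1 (2 ^ ns j - 1),
                q (k + (n - ∑ i ∈ Finset.range (j + 1), 2 ^ ns i)) * Walsh.D k x) := by
  have hblock : ∀ j ∈ range r,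
      ∑ v ∈ range (2 ^ ns j), Walsh.Q q (n - (∑ i ∈ range j, 2 ^ ns i + v)) *
          Walsh.walsh (∑ i ∈ range j, 2 ^ ns i + v) x
        = Walsh.walsh n x * (Walsh.Q q (n - ∑ i ∈ range j, 2 ^ ns i) *
            (Walsh.walsh (2 ^ ns j) x * Walsh.D (2 ^ ns j) x)
          - Walsh.walsh (n - ∑ i ∈ range j, 2 ^ ns i) x * Walsh.walsh (2 ^ ns j - 1) x *
            ∑ k ∈ Icc 1 (2 ^ ns j - 1),
              q (k + (n - ∑ i ∈ range (j + 1), 2 ^ ns i)) * Walsh.D k x) := by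
    intro j hj
    rw [mem_range] at hj
    have htail := Walsh.sum_Ico_two_pow_lt hdec j
    have hsplit : ∑ i ∈ range (j + 1), 2 ^ ns i + ∑ i ∈ Ico (j + 1) r, 2 ^ ns i = n :=
      hrep ▸ sum_range_add_sum_Ico _ hj
    rw [sum_range_succ] at hsplit ⊢
    exact Walsh.sum_Q_mul_walsh_block q (Walsh.two_pow_succ_dvd_sum_range hdec hj) (by omega)
      (by omega) x
  rw [Walsh.F, Walsh.sum_mul_D_eq_sum_Q_mul_walsh, sum_range_eq_sum_blocks _ hrep,
    sum_congr rfl hblock, ← mul_sum, sum_sub_distrib]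
  ring

/-- decomposition of the Nörlund kernel along the binary
decomposition `n = 2^{n_1} + ⋯ + 2^{n_r}`, with `n^{(j)} = n - Σ_{i ≤ j} 2^{n_i}`. -/
theorem norlund_kernel_decomposition
    (q : ℕ → ℝ) (hq_nonneg : ∀ k, 0 ≤ q k) (hq0 : 0 < q 0)
    (n r : ℕ) (hn : 1 ≤ n) (ns : ℕ → ℕ)
    (hdec : ∀ i j, i < j → j < r → ns j < ns i)
    (hrep : n = ∑ j ∈ Finset.range r, 2 ^ ns j)
    (x : ℝ) (hx : x ∈ Set.Ico (0:ℝ) 1) :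
    Walsh.F q n x
      = (Walsh.walsh n x / Walsh.Q q n) *
          (∑ j ∈ Finset.range r,
            Walsh.Q q (n - ∑ i ∈ Finset.range j, 2 ^ ns i) *
              (Walsh.walsh (2 ^ ns j) x * Walsh.D (2 ^ ns j) x))
        - (Walsh.walsh n x / Walsh.Q q n) *
          (∑ j ∈ Finset.range r,
            Walsh.walsh (n - ∑ i ∈ Finset.range j, 2 ^ ns i) x *
              Walsh.walsh (2 ^ ns j - 1) x *
              ∑ k ∈ Finset.Icc 1 (2 ^ ns j - 1),
                q (k + (n - ∑ i ∈ Finset.range (j + 1), 2 ^ ns i)) * Walsh.D k x) :=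
  norlund_kernel_decomposition_general q n r ns hdec hrep x
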